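/- Let W : ℝ² → ℝ² be continuously differentiable with compact support, let Δ ⊂ ℝ² be a bounded measurable set, let p : ℝ × ℝ² → ℝ and φ : ℝ × ℝ² → ℝ² be twice continuously differentiable. Write p = p(0, ·), φ = φ(0, ·), ṗ(x) = d/dt|_{t=0} p(t, F_t(x)), φ̇(x) = d/dt|_{t=0} φ(t, F_t(x)). Then the map t ↦ ∫_{F_t(Δ)} − p(t,·)(y) · div(φ(t,·))(y) dy is differentiable at t = 0 and its derivative equals ∫_Δ [ − ṗ(x) div φ(x) − p(x) div φ̇(x) + p(x) (∇φ(x))^⊤ : ∇W(x) + div W(x) · ( − p(x) div φ(x) ) ] dx. -/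

import Mathlib

open MeasureTheory

/-- Jacobian matrix of a vector field on `ℝ²`: `(jac v x) i j = ∂ v_i / ∂ x_j`. -/
noncomputable def jac (v : EuclideanSpace ℝ (Fin 2) → EuclideanSpace ℝ (Fin 2))
    (x : EuclideanSpace ℝ (Fin 2)) : Matrix (Fin 2) (Fin 2) ℝ :=
  Matrix.of fun i j => fderiv ℝ v x (EuclideanSpace.single j (1 : ℝ)) i

/-- Divergence of a vector field: the trace of its Jacobian. -/
noncomputable def divg (v : EuclideanSpace ℝ (Fin 2) → EuclideanSpace ℝ (Fin 2))
    (x : EuclideanSpace ℝ (Fin 2)) : ℝ :=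
  Matrix.trace (jac v x)

/-- Frobenius inner product of matrices: `A : B = ∑_{j,k} A_{jk} B_{jk}`. -/
def frob (A B : Matrix (Fin 2) (Fin 2) ℝ) : ℝ :=
  ∑ j, ∑ k, A j k * B j k

/-!
Pull the integral back to `Δ` along `F_t x = x + t • W x`. For small `t` the map `F_t` is
injective on `Δ` (as `W` is Lipschitz on a ball containing `Δ`) and its Jacobian determinant
`det (1 + t ∇W) = 1 + t div W + t² det ∇W` is positive, so the integral equals
`∫_Δ J_t(x) G(t, F_t x) dx` with `G = -p div_y φ`. The `t`-derivative of this integrand is jointly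
continuous, hence bounded on `[-1, 1] × closure Δ`, and we may differentiate under the integral.
At `t = 0` the Jacobian contributes `div W · G`, and by the symmetry of the second derivative of
`φ`, the material derivative of `∇_y φ` is `∇φ̇ - ∇φ ∇W`, whose trace is `div φ̇ - (∇φ)ᵀ : ∇W`.
-/

open Filter Topology Set ContinuousLinearMap

section FlowCalculus

variable {E F : Type*} [NormedAddCommGroup E] [NormedSpace ℝ E]
  [NormedAddCommGroup F] [NormedSpace ℝ F]

lemma fderiv_slice {f : ℝ × E → F} {t : ℝ} {y : E} (hf : DifferentiableAt ℝ f (t, y)) :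
    fderiv ℝ (fun z => f (t, z)) y = fderiv ℝ f (t, y) ∘L inr ℝ ℝ E :=
  (hf.hasFDerivAt.comp y (hasFDerivAt_prodMk_right t y)).fderiv

lemma hasDerivAt_along_flow {g : ℝ × E → F} {w x : E} {t : ℝ}
    (hg : DifferentiableAt ℝ g (t, x + t • w)) :
    HasDerivAt (fun s : ℝ => g (s, x + s • w)) (fderiv ℝ g (t, x + t • w) (1, w)) t := by
  have hcurve : HasDerivAt (fun s : ℝ => (s, x + s • w)) ((1 : ℝ), w) t :=
    (hasDerivAt_id t).prodMk (by simpa using ((hasDerivAt_id t).smul_const w).const_add x)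
  exact hg.hasFDerivAt.comp_hasDerivAt t hcurve

noncomputable def materialDeriv (g : ℝ × E → F) (W : E → E) (z : E) : F :=
  deriv (fun t : ℝ => g (t, z + t • W z)) 0

lemma materialDeriv_eq {g : ℝ × E → F} (hg : Differentiable ℝ g) (W : E → E) :
    materialDeriv g W = fun z => fderiv ℝ g (0, z) (1, W z) := by
  ext1 z
  show deriv _ 0 = _
  simpa using (hasDerivAt_along_flow (w := W z) (x := z) (t := 0) (by simpa using hg (0, z))).deriv

lemma hasFDerivAt_materialDeriv {φ : ℝ × E → F} {W : E → E} {x : E}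
    (hφ : ContDiff ℝ 2 φ) (hW : DifferentiableAt ℝ W x) :
    HasFDerivAt (materialDeriv φ W)
      (fderiv ℝ (fderiv ℝ φ) (0, x) (1, W x) ∘L inr ℝ ℝ E
        + fderiv ℝ (fun z => φ (0, z)) x ∘L fderiv ℝ W x) x := by
  have hD : Differentiable ℝ (fderiv ℝ φ) :=
    (hφ.fderiv_right (m := 1) (by norm_num)).differentiable one_ne_zero
  have hsymm := (hφ.contDiffAt (x := (0, x))).isSymmSndFDerivAt (by simp)
  have hu : HasFDerivAt (fun z : E => ((1 : ℝ), W z)) ((0 : E →L[ℝ] ℝ).prod (fderiv ℝ W x)) x :=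
    (hasFDerivAt_const 1 x).prodMk hW.hasFDerivAt
  rw [materialDeriv_eq (hφ.differentiable two_ne_zero)]
  convert ((hD _).hasFDerivAt.comp x (hasFDerivAt_prodMk_right 0 x)).clm_apply hu using 1
  · rfl
  rw [add_comm, fderiv_slice (hφ.differentiable two_ne_zero _)]
  congr 1
  ext v
  exact hsymm _ _

lemma hasDerivAt_fderiv_slice_along_flow {φ : ℝ × E → F} {W : E → E} {x : E}
    (hφ : ContDiff ℝ 2 φ) (hW : DifferentiableAt ℝ W x) :
    HasDerivAt (fun t => fderiv ℝ (fun z => φ (t, z)) (x + t • W x))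
      (fderiv ℝ (materialDeriv φ W) x - fderiv ℝ (fun z => φ (0, z)) x ∘L fderiv ℝ W x) 0 := by
  have hD : Differentiable ℝ (fderiv ℝ φ) :=
    (hφ.fderiv_right (m := 1) (by norm_num)).differentiable one_ne_zero
  simp only [fderiv_slice (hφ.differentiable two_ne_zero _),
    (hasFDerivAt_materialDeriv hφ hW).fderiv, add_sub_cancel_right]
  simpa using (hasDerivAt_along_flow (hD _)).clm_comp (hasDerivAt_const 0 (inr ℝ ℝ E))

lemma eventually_injOn_add_smul {W : E → E} {s : Set E} {K : NNReal}
    (hW : LipschitzOnWith K W s) : ∀ᶠ t in 𝓝 (0 : ℝ), InjOn (fun x => x + t • W x) s := by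
  have hsmall : ∀ᶠ t in 𝓝 (0 : ℝ), ‖t‖₊ * K < 1 :=
    ((continuous_nnnorm.mul continuous_const).tendsto' (0 : ℝ) 0 (by simp)).eventually
      (gt_mem_nhds one_pos)
  filter_upwards [hsmall] with t ht
  exact injOn_iff_injective.2 ((AntilipschitzWith.subtype_coe s).add_lipschitzWith
    ((lipschitzWith_smul t).comp hW.to_restrict) (by simpa using ht)).injective

end FlowCalculus

section Trace

variable {E : Type*} [NormedAddCommGroup E] [NormedSpace ℝ E] [FiniteDimensional ℝ E]

noncomputable def traceCLM : (E →L[ℝ] E) →L[ℝ] ℝ :=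
  LinearMap.toContinuousLinearMap (LinearMap.trace ℝ E ∘ₗ ContinuousLinearMap.coeLM ℝ)

@[simp] lemma traceCLM_apply (A : E →L[ℝ] E) : traceCLM A = LinearMap.trace ℝ E A := rfl

end Trace

section ParametricIntegral

variable {X E : Type*} [TopologicalSpace X] [MeasurableSpace X] [OpensMeasurableSpace X]
  [NormedAddCommGroup E] [NormedSpace ℝ E] {μ : Measure X} [IsFiniteMeasureOnCompacts μ]

lemma hasDerivAt_setIntegral_of_continuous_uncurry_deriv {s K : Set X} (hs : MeasurableSet s)
    (hK : IsCompact K) (hsK : s ⊆ K) {F F' : ℝ → X → E} (hF : ∀ t, Continuous (F t))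
    (hF' : Continuous (Function.uncurry F')) (hFF' : ∀ t x, HasDerivAt (F · x) (F' t x) t)
    (t₀ : ℝ) : HasDerivAt (fun t => ∫ x in s, F t x ∂μ) (∫ x in s, F' t₀ x ∂μ) t₀ := by
  have hμs : μ s < ⊤ := (measure_mono hsK).trans_lt hK.measure_lt_top
  have hint : ∀ f : X → E, Continuous f → IntegrableOn f s μ := fun f hf =>
    hf.continuousOn.integrableOn_of_subset_isCompact hK hs hsK hμs.ne
  obtain ⟨C, hC⟩ := ((isCompact_closedBall t₀ 1).prod hK).exists_bound_of_continuousOn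
    hF'.continuousOn
  refine (hasDerivAt_integral_of_dominated_loc_of_deriv_le (bound := fun _ => C)
    (Metric.ball_mem_nhds t₀ one_pos) (Eventually.of_forall fun t => (hint _ (hF t)).1)
    (hint _ (hF t₀)) (hint _ (hF'.comp (Continuous.prodMk_right t₀))).1
    (ae_restrict_of_forall_mem hs fun x hx t ht =>
      hC (t, x) ⟨Metric.ball_subset_closedBall ht, hsK hx⟩)
    (integrableOn_const hμs.ne) (Eventually.of_forall fun x t _ => hFF' t x)).2

end ParametricIntegral

local notation "E₂" => EuclideanSpace ℝ (Fin 2)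

lemma jac_eq_toMatrix (v : E₂ → E₂) (x : E₂) :
    jac v x = LinearMap.toMatrix (EuclideanSpace.basisFun (Fin 2) ℝ).toBasis
      (EuclideanSpace.basisFun (Fin 2) ℝ).toBasis (fderiv ℝ v x) := by
  ext i j
  simp [jac, LinearMap.toMatrix_apply]

lemma divg_eq_traceCLM (v : E₂ → E₂) (x : E₂) : divg v x = traceCLM (fderiv ℝ v x) := by
  rw [divg, jac_eq_toMatrix, traceCLM_apply,
    LinearMap.trace_eq_matrix_trace ℝ (EuclideanSpace.basisFun (Fin 2) ℝ).toBasis]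

lemma frob_transpose (A B : Matrix (Fin 2) (Fin 2) ℝ) : frob A.transpose B = (A * B).trace := by
  simp only [frob, Matrix.trace, Matrix.diag, Matrix.mul_apply, Matrix.transpose_apply]
  exact Finset.sum_comm

lemma frob_transpose_jac (u v : E₂ → E₂) (x : E₂) :
    frob (jac u x).transpose (jac v x) = traceCLM (fderiv ℝ u x ∘L fderiv ℝ v x) := by
  rw [frob_transpose, jac_eq_toMatrix, jac_eq_toMatrix, ← LinearMap.toMatrix_comp,
    traceCLM_apply, LinearMap.trace_eq_matrix_trace ℝ (EuclideanSpace.basisFun (Fin 2) ℝ).toBasis]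
  rfl

lemma hasDerivAt_divg_slice_along_flow {φ : ℝ × E₂ → E₂} {W : E₂ → E₂} {x : E₂}
    (hφ : ContDiff ℝ 2 φ) (hW : DifferentiableAt ℝ W x) :
    HasDerivAt (fun t => divg (fun z => φ (t, z)) (x + t • W x))
      (divg (materialDeriv φ W) x - frob (jac (fun z => φ (0, z)) x).transpose (jac W x)) 0 := by
  have h := (traceCLM (E := E₂)).hasFDerivAt.comp_hasDerivAt (0 : ℝ)
    (hasDerivAt_fderiv_slice_along_flow hφ hW)
  rw [map_sub, ← divg_eq_traceCLM, ← frob_transpose_jac] at h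
  exact h.congr_of_eventuallyEq (Eventually.of_forall fun t => divg_eq_traceCLM _ _)

lemma contDiff_divg_slice {φ : ℝ × E₂ → E₂} (hφ : ContDiff ℝ 2 φ) :
    ContDiff ℝ 1 fun q : ℝ × E₂ => divg (fun z => φ (q.1, z)) q.2 := by
  simp only [divg_eq_traceCLM, fderiv_slice (hφ.differentiable two_ne_zero _)]
  exact traceCLM.contDiff.comp ((hφ.fderiv_right (m := 1) le_rfl).clm_comp contDiff_const)

lemma hasDerivAt_neg_mul_divg_slice_along_flow {p : ℝ × E₂ → ℝ} {φ : ℝ × E₂ → E₂}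
    {W : E₂ → E₂} {x : E₂} (hp : Differentiable ℝ p) (hφ : ContDiff ℝ 2 φ)
    (hW : DifferentiableAt ℝ W x) :
    HasDerivAt (fun t => -p (t, x + t • W x) * divg (fun z => φ (t, z)) (x + t • W x))
      (-materialDeriv p W x * divg (fun z => φ (0, z)) x
        - p (0, x) * (divg (materialDeriv φ W) x
          - frob (jac (fun z => φ (0, z)) x).transpose (jac W x))) 0 := by
  have hpflow := hasDerivAt_along_flow (w := W x) (x := x) (t := 0) (hp _)
  simp only [zero_smul, add_zero] at hpflow
  rw [materialDeriv_eq hp]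
  refine (hpflow.neg.mul (hasDerivAt_divg_slice_along_flow hφ hW)).congr_deriv ?_
  simp only [Pi.neg_apply, zero_smul, add_zero]
  ring

noncomputable def flowJacDet (W : E₂ → E₂) (t : ℝ) (x : E₂) : ℝ :=
  1 + t * divg W x + t ^ 2 * (jac W x).det

lemma det_one_add_smul_fderiv (W : E₂ → E₂) (t : ℝ) (x : E₂) :
    ((1 : E₂ →L[ℝ] E₂) + t • fderiv ℝ W x).det = flowJacDet W t x := by
  rw [ContinuousLinearMap.det,
    ← LinearMap.det_toMatrix (EuclideanSpace.basisFun (Fin 2) ℝ).toBasis,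
    toLinearMap_add, toLinearMap_smul, map_add, _root_.map_smul, ← jac_eq_toMatrix,
    ContinuousLinearMap.one_def, coe_id, LinearMap.toMatrix_id,
    Matrix.det_fin_two, flowJacDet, divg, Matrix.trace_fin_two, Matrix.det_fin_two]
  simp only [Matrix.add_apply, Matrix.smul_apply, Matrix.one_apply_eq, smul_eq_mul, ne_eq,
    zero_ne_one, not_false_eq_true, Matrix.one_apply_ne, one_ne_zero]
  ring

lemma hasDerivAt_flowJacDet (W : E₂ → E₂) (t : ℝ) (x : E₂) :
    HasDerivAt (fun s => flowJacDet W s x) (divg W x + 2 * t * (jac W x).det) t := by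
  have h := ((hasDerivAt_id' t).mul_const (divg W x)).const_add 1 |>.add
    ((hasDerivAt_pow 2 t).mul_const (jac W x).det)
  simpa [flowJacDet, Pi.add_def] using h

lemma continuous_jac {W : E₂ → E₂} (hW : ContDiff ℝ 1 W) : Continuous (jac W) :=
  continuous_matrix fun i _ => (EuclideanSpace.proj i).continuous.comp
    ((hW.continuous_fderiv one_ne_zero).clm_apply continuous_const)

lemma continuous_flowJacDet {W : E₂ → E₂} (hW : ContDiff ℝ 1 W) :
    Continuous (Function.uncurry (flowJacDet W)) := by
  have hdiv : Continuous (divg W) := (continuous_jac hW).matrix_trace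
  have hdet : Continuous fun x => (jac W x).det := (continuous_jac hW).matrix_det
  exact (continuous_const.add (continuous_fst.mul (hdiv.comp continuous_snd))).add
    ((continuous_fst.pow 2).mul (hdet.comp continuous_snd))

lemma eventually_forall_flowJacDet_pos {W : E₂ → E₂} (hW : ContDiff ℝ 1 W) {K : Set E₂}
    (hK : IsCompact K) : ∀ᶠ t in 𝓝 (0 : ℝ), ∀ x ∈ K, 0 < flowJacDet W t x :=
  hK.eventually_forall_of_forall_eventually fun x _ =>
    ((continuous_flowJacDet hW).tendsto (0, x)).eventually
      (lt_mem_nhds (by simp [flowJacDet] : (0 : ℝ) < flowJacDet W 0 x))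

lemma eventually_setIntegral_image_add_smul {W : E₂ → E₂} (hW : ContDiff ℝ 1 W) {Δ : Set E₂}
    (hΔm : MeasurableSet Δ) (hΔb : Bornology.IsBounded Δ) :
    ∀ᶠ t in 𝓝 (0 : ℝ), ∀ g : E₂ → ℝ,
      ∫ y in (fun x => x + t • W x) '' Δ, g y = ∫ x in Δ, flowJacDet W t x * g (x + t • W x) := by
  obtain ⟨R, hR⟩ := hΔb.subset_closedBall 0
  obtain ⟨K, hK⟩ := hW.contDiffOn.exists_lipschitzOnWith one_ne_zero (convex_closedBall 0 R)
    (isCompact_closedBall 0 R)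
  filter_upwards [eventually_injOn_add_smul (hK.mono hR),
    eventually_forall_flowJacDet_pos hW hΔb.isCompact_closure] with t hinj hpos g
  have hderiv : ∀ x ∈ Δ, HasFDerivWithinAt (fun x => x + t • W x) (1 + t • fderiv ℝ W x) Δ x :=
    fun x _ => ((hasFDerivAt_id x).add
      ((hW.differentiable one_ne_zero x).hasFDerivAt.const_smul t)).hasFDerivWithinAt
  rw [integral_image_eq_integral_abs_det_fderiv_smul volume hΔm hderiv hinj]
  refine setIntegral_congr_fun hΔm fun x hx => ?_
  rw [det_one_add_smul_fderiv, abs_of_pos (hpos x (subset_closure hx)), smul_eq_mul]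

lemma hasDerivAt_setIntegral_flowJacDet_mul {W : E₂ → E₂} (hW : ContDiff ℝ 1 W)
    {G : ℝ × E₂ → ℝ} (hG : ContDiff ℝ 1 G) {Δ : Set E₂} (hΔm : MeasurableSet Δ)
    (hΔb : Bornology.IsBounded Δ) :
    HasDerivAt (fun t => ∫ x in Δ, flowJacDet W t x * G (t, x + t • W x))
      (∫ x in Δ, (divg W x * G (0, x) + fderiv ℝ G (0, x) (1, W x))) 0 := by
  have hWcont : Continuous W := hW.continuous
  have hJ : Continuous fun q : ℝ × E₂ => flowJacDet W q.1 q.2 := continuous_flowJacDet hW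
  have hdiv : Continuous (divg W) := (continuous_jac hW).matrix_trace
  have hjac : Continuous (jac W) := continuous_jac hW
  have hGc : Continuous G := hG.continuous
  have hG'c : Continuous (fderiv ℝ G) := hG.continuous_fderiv one_ne_zero
  have h := hasDerivAt_setIntegral_of_continuous_uncurry_deriv (μ := volume) hΔm
    hΔb.isCompact_closure subset_closure
    (F := fun t x => flowJacDet W t x * G (t, x + t • W x))
    (F' := fun t x => (divg W x + 2 * t * (jac W x).det) * G (t, x + t • W x)
      + flowJacDet W t x * fderiv ℝ G (t, x + t • W x) (1, W x))
    (fun t => by fun_prop) (by fun_prop)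
    (fun t x => (hasDerivAt_flowJacDet W t x).mul
      (hasDerivAt_along_flow ((hG.differentiable one_ne_zero) _))) 0
  simpa [flowJacDet] using h

theorem shape_derivative_L4_general
    (W : EuclideanSpace ℝ (Fin 2) → EuclideanSpace ℝ (Fin 2))
    (hW : ContDiff ℝ 1 W)
    (Δ : Set (EuclideanSpace ℝ (Fin 2))) (hΔm : MeasurableSet Δ)
    (hΔb : Bornology.IsBounded Δ)
    (p : ℝ × EuclideanSpace ℝ (Fin 2) → ℝ)
    (φ : ℝ × EuclideanSpace ℝ (Fin 2) → EuclideanSpace ℝ (Fin 2))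
    (hp : ContDiff ℝ 2 p) (hφ : ContDiff ℝ 2 φ)
    (p₀ : EuclideanSpace ℝ (Fin 2) → ℝ) (pdot : EuclideanSpace ℝ (Fin 2) → ℝ)
    (φ₀ φdot : EuclideanSpace ℝ (Fin 2) → EuclideanSpace ℝ (Fin 2))
    (hp₀ : p₀ = fun z => p ((0 : ℝ), z))
    (hpdot : pdot = fun z => deriv (fun t : ℝ => p (t, z + t • W z)) 0)
    (hφ₀ : φ₀ = fun z => φ ((0 : ℝ), z))
    (hφdot : φdot = fun z => deriv (fun t : ℝ => φ (t, z + t • W z)) 0) :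
    HasDerivAt
      (fun t : ℝ => ∫ y in (fun x => x + t • W x) '' Δ,
        -(p (t, y)) * divg (fun z => φ (t, z)) y)
      (∫ x in Δ,
        (-(pdot x) * divg φ₀ x
          - p₀ x * divg φdot x
          + p₀ x * frob (jac φ₀ x).transpose (jac W x)
          + divg W x * (-(p₀ x) * divg φ₀ x))) (0 : ℝ) := by
  replace hpdot : pdot = materialDeriv p W := hpdot
  replace hφdot : φdot = materialDeriv φ W := hφdot
  subst hp₀ hpdot hφ₀ hφdot
  set G : ℝ × E₂ → ℝ := fun q => -(p q) * divg (fun z => φ (q.1, z)) q.2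
  have hG : ContDiff ℝ 1 G := (hp.of_le one_le_two).neg.mul (contDiff_divg_slice hφ)
  have hGdot : ∀ x, fderiv ℝ G (0, x) (1, W x)
      = -materialDeriv p W x * divg (fun z => φ (0, z)) x
        - p (0, x) * (divg (materialDeriv φ W) x
          - frob (jac (fun z => φ (0, z)) x).transpose (jac W x)) := fun x => by
    simpa using (hasDerivAt_along_flow (w := W x) (x := x) (t := 0)
      (hG.differentiable one_ne_zero _)).unique
      (hasDerivAt_neg_mul_divg_slice_along_flow (hp.differentiable two_ne_zero) hφ
        (hW.differentiable one_ne_zero x))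
  refine ((hasDerivAt_setIntegral_flowJacDet_mul hW hG hΔm hΔb).congr_of_eventuallyEq
    ?_).congr_deriv ?_
  · filter_upwards [eventually_setIntegral_image_add_smul hW hΔm hΔb] with t ht using ht _
  · refine integral_congr_ae (Eventually.of_forall fun x => ?_)
    simp only [G, hGdot]
    ring

/-- Shape derivative of the pressure term
`t ↦ ∫_{F_t(Δ)} − p(t,·) div(φ(t,·)) dy`. -/
theorem shape_derivative_L4
    (W : EuclideanSpace ℝ (Fin 2) → EuclideanSpace ℝ (Fin 2))
    (hW : ContDiff ℝ 1 W) (hWc : HasCompactSupport W)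
    (Δ : Set (EuclideanSpace ℝ (Fin 2))) (hΔm : MeasurableSet Δ)
    (hΔb : Bornology.IsBounded Δ)
    (p : ℝ × EuclideanSpace ℝ (Fin 2) → ℝ)
    (φ : ℝ × EuclideanSpace ℝ (Fin 2) → EuclideanSpace ℝ (Fin 2))
    (hp : ContDiff ℝ 2 p) (hφ : ContDiff ℝ 2 φ)
    (p₀ : EuclideanSpace ℝ (Fin 2) → ℝ) (pdot : EuclideanSpace ℝ (Fin 2) → ℝ)
    (φ₀ φdot : EuclideanSpace ℝ (Fin 2) → EuclideanSpace ℝ (Fin 2))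
    (hp₀ : p₀ = fun z => p ((0 : ℝ), z))
    (hpdot : pdot = fun z => deriv (fun t : ℝ => p (t, z + t • W z)) 0)
    (hφ₀ : φ₀ = fun z => φ ((0 : ℝ), z))
    (hφdot : φdot = fun z => deriv (fun t : ℝ => φ (t, z + t • W z)) 0) :
    HasDerivAt
      (fun t : ℝ => ∫ y in (fun x => x + t • W x) '' Δ,
        -(p (t, y)) * divg (fun z => φ (t, z)) y)
      (∫ x in Δ,
        (-(pdot x) * divg φ₀ x
          - p₀ x * divg φdot x
          + p₀ x * frob (jac φ₀ x).transpose (jac W x)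
          + divg W x * (-(p₀ x) * divg φ₀ x))) (0 : ℝ) :=
  shape_derivative_L4_general W hW Δ hΔm hΔb p φ hp hφ p₀ pdot φ₀ φdot hp₀ hpdot hφ₀ hφdot
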